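/- Let T be a finite tree, let v be a vertex of degree 1 with unique neighbor w, and set T₁ = T ∖ {v}, T₂ = T ∖ {v,w}. For every k and n there is a short exact sequence of F₂-vector spaces 0 → SC^k(T₁,n) ⊕ SC^{k−1}(T₁,n−1) → SC^k(T,n) → SC^k(T₂,n−1) → 0, where the first map sends a configuration of T₁ in the first (resp. second) summand to the configuration of T obtained by additionally assigning + (resp. −) to v, and the second map sends a configuration of T in which the edge vw is red to the configuration of T₂ obtained by deleting v, w and the red edge vw, and sends all other configurations to 0; moreover both maps commute with the differential D. -/

import Mathlib

open Polynomial Matrix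

attribute [local instance] Classical.propDecidable

namespace Seifert

variable {V : Type} [Fintype V]

/-- A matching of a graph `G`: a finite set of edges of `G` that are pairwise disjoint. -/
def IsMatching (G : SimpleGraph V) (R : Finset (Sym2 V)) : Prop :=
  (∀ e ∈ R, e ∈ G.edgeSet) ∧
    ∀ e ∈ R, ∀ f ∈ R, e ≠ f → ∀ v : V, v ∈ e → v ∉ f

/-- A perfect matching: a matching covering every vertex. -/
def IsPerfectMatching (G : SimpleGraph V) (R : Finset (Sym2 V)) : Prop :=
  IsMatching G R ∧ ∀ v : V, ∃ e ∈ R, v ∈ e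

/-- A configuration on `G`: a matching (the set of red edges) together with an assignment
of a sign (`true` = plus, `false` = minus) to every vertex not covered by a red edge;
vertices covered by a red edge get `none`. -/
structure Config (G : SimpleGraph V) where
  red : Finset (Sym2 V)
  matching : IsMatching G red
  sign : V → Option Bool
  sign_none : ∀ v : V, sign v = none ↔ ∃ e ∈ red, v ∈ e

instance (G : SimpleGraph V) : Finite (Config G) :=
  Finite.of_injective (fun C => (C.red, C.sign)) (by
    rintro ⟨r, hr, s, hs⟩ ⟨r', hr', s', hs'⟩ h
    simp only [Prod.mk.injEq] at h
    obtain ⟨h1, h2⟩ := h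
    subst h1; subst h2; rfl)

noncomputable instance (G : SimpleGraph V) : Fintype (Config G) := Fintype.ofFinite _

/-- The grading `Q`: the number of minuses. -/
noncomputable def Qg {G : SimpleGraph V} (C : Config G) : ℕ :=
  (Finset.univ.filter fun v : V => C.sign v = some false).card

/-- The grading `E`: the number of minuses plus the number of red edges. -/
noncomputable def Eg {G : SimpleGraph V} (C : Config G) : ℕ := Qg C + C.red.card

/-- `DStep C C'` holds iff `C'` is one of the summands of `D(C)`: it is obtained from `C`
by deleting one red edge `e` and assigning a plus to one endpoint of `e` and a minus to
the other. -/
def DStep {G : SimpleGraph V} (C C' : Config G) : Prop :=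
  ∃ e ∈ C.red, C'.red = C.red.erase e ∧
    (∀ x : V, x ∉ e → C'.sign x = C.sign x) ∧
    ∃ u v : V, e = s(u, v) ∧ C'.sign u = some true ∧ C'.sign v = some false

/-- `dStep C C'` holds iff `C'` is one of the summands of `d(C)`: it is obtained from `C`
by changing the sign of one vertex from plus to minus. -/
def dStep {G : SimpleGraph V} (C C' : Config G) : Prop :=
  C'.red = C.red ∧ ∃ w : V, C.sign w = some true ∧ C'.sign w = some false ∧
    ∀ x : V, x ≠ w → C'.sign x = C.sign x

/-- The linear map on spaces of `F₂`-valued functions induced by a relation `r`: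
the basis vector of `a` is sent to the sum of the basis vectors of all `b` with `r a b`. -/
noncomputable def sumLin {α β : Type} [Fintype α] (r : α → β → Prop) :
    (α → ZMod 2) →ₗ[ZMod 2] (β → ZMod 2) where
  toFun f b := ∑ a : α, if r a b then f a else 0
  map_add' f g := by
    funext b
    simp only [Pi.add_apply]
    rw [← Finset.sum_add_distrib]
    exact Finset.sum_congr rfl fun a _ => by by_cases h : r a b <;> simp [h]
  map_smul' c f := by
    funext b
    simp only [RingHom.id_apply, Pi.smul_apply, smul_eq_mul, Finset.mul_sum]
    exact Finset.sum_congr rfl fun a _ => by by_cases h : r a b <;> simp [h]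

/-- The differential `D` on the total Seifert complex `SC(T)`. -/
noncomputable def Dmap (G : SimpleGraph V) :
    (Config G → ZMod 2) →ₗ[ZMod 2] (Config G → ZMod 2) :=
  sumLin DStep

/-- The differential `d` on the total Seifert complex `SC(T)`. -/
noncomputable def dmap (G : SimpleGraph V) :
    (Config G → ZMod 2) →ₗ[ZMod 2] (Config G → ZMod 2) :=
  sumLin dStep

/-- The graded piece `SC^k(T,n)`: the `F₂`-vector space with basis the configurations
with `Q = k` and `E = n`. -/
abbrev SC (G : SimpleGraph V) (k n : ℤ) : Type :=
  {C : Config G // (Qg C : ℤ) = k ∧ (Eg C : ℤ) = n} → ZMod 2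

/-- The differential `D` between graded pieces. (Mathematically it is nonzero only
from `SC^k(T,n)` to `SC^{k+1}(T,n)`.) -/
noncomputable def Dgr (G : SimpleGraph V) (k n k' n' : ℤ) :
    SC G k n →ₗ[ZMod 2] SC G k' n' :=
  sumLin fun C C' => DStep C.1 C'.1

/-- The dimension of the cohomology `ker g / im f` at the middle term of `A —f→ B —g→ C`
(taking the image of `f` intersected with the kernel of `g`). -/
noncomputable def cohDim {A B M : Type} [AddCommGroup A] [AddCommGroup B] [AddCommGroup M]
    [Module (ZMod 2) A] [Module (ZMod 2) B] [Module (ZMod 2) M]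
    (f : A →ₗ[ZMod 2] B) (g : B →ₗ[ZMod 2] M) : ℕ :=
  Module.finrank (ZMod 2)
    (LinearMap.ker g ⧸ (LinearMap.range f).comap (LinearMap.ker g).subtype)

/-- The dimension of the Seifert cohomology `SH^k(T,n)`. -/
noncomputable def SHdim (G : SimpleGraph V) (k n : ℤ) : ℕ :=
  cohDim (Dgr G (k - 1) n k n) (Dgr G k n (k + 1) n)

/-- The Seifert matrix of a graph with respect to an enumeration of its vertices. -/
noncomputable def seifertMatrix (G : SimpleGraph V) {m : ℕ} (e : V ≃ Fin m) :
    Matrix (Fin m) (Fin m) ℤ := fun i j =>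
  if i = j then -1 else if i < j ∧ G.Adj (e.symm i) (e.symm j) then 1 else 0

/-- The Alexander polynomial `det (t S - Sᵀ)` of a graph with respect to an enumeration
of its vertices. -/
noncomputable def alexDet (G : SimpleGraph V) {m : ℕ} (e : V ≃ Fin m) : Polynomial ℤ :=
  let S : Matrix (Fin m) (Fin m) (Polynomial ℤ) :=
    (seifertMatrix G e).map fun a => (Polynomial.C a : Polynomial ℤ)
  ((X : Polynomial ℤ) • S - Sᵀ).det

/-- The Alexander polynomial of a graph (or forest), defined as the matching polynomial
`Σ_R t^{|R|} (1-t)^{V - 2|R|}`, the sum being over all matchings `R`. -/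
noncomputable def alexMatch (G : SimpleGraph V) : Polynomial ℤ :=
  ∑ R : {R : Finset (Sym2 V) // IsMatching G R},
    X ^ R.1.card * (1 - X) ^ (Fintype.card V - 2 * R.1.card)


/-- `extendRel G v b C₁ C` holds iff the configuration `C` of `G` is obtained from the
configuration `C₁` of `G ∖ {v}` by additionally assigning the sign `b` to `v`. -/
def extendRel (G : SimpleGraph V) (v : V) (b : Bool)
    (C₁ : Config (G.induce {x : V | x ≠ v})) (C : Config G) : Prop :=
  C.red = C₁.red.image (Sym2.map Subtype.val) ∧ C.sign v = some b ∧
    ∀ x : ↥{x : V | x ≠ v}, C.sign x.1 = C₁.sign x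

/-- `quotRel G v w C C₂` holds iff the edge `vw` is red in the configuration `C` of `G`
and `C₂` is the configuration of `G ∖ {v,w}` obtained from `C` by deleting `v`, `w`
and the red edge `vw`. -/
def quotRel (G : SimpleGraph V) (v w : V)
    (C : Config G) (C₂ : Config (G.induce {x : V | x ≠ v ∧ x ≠ w})) : Prop :=
  s(v, w) ∈ C.red ∧
    C₂.red.image (Sym2.map Subtype.val) = C.red.erase s(v, w) ∧
    ∀ x : ↥{x : V | x ≠ v ∧ x ≠ w}, C₂.sign x = C.sign x.1

/-- The first map of the short exact sequence: on basis configurations it extends a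
configuration of `T₁ = T ∖ {v}` in the first (resp. second) summand by a plus
(resp. minus) at `v`. -/
noncomputable def inclMap (G : SimpleGraph V) (v : V) (k₁ n₁ k₂ n₂ k n : ℤ) :
    (SC (G.induce {x : V | x ≠ v}) k₁ n₁ × SC (G.induce {x : V | x ≠ v}) k₂ n₂)
      →ₗ[ZMod 2] SC G k n :=
  LinearMap.coprod
    (sumLin fun C₁ C => extendRel G v true C₁.1 C.1)
    (sumLin fun C₁ C => extendRel G v false C₁.1 C.1)

/-- The second map of the short exact sequence: on basis configurations it deletes
`v`, `w` and the red edge `vw` (and kills configurations where `vw` is not red). -/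
noncomputable def projMap (G : SimpleGraph V) (v w : V) (k n k' n' : ℤ) :
    SC G k n →ₗ[ZMod 2] SC (G.induce {x : V | x ≠ v ∧ x ≠ w}) k' n' :=
  sumLin fun C C₂ => quotRel G v w C.1 C₂.1


/-!
Sort the configurations of `T` by the state of the leaf `v`: it carries `+`, it carries `−`, or it
is covered by a red edge, which can only be `vw`. Gluing a configuration of `T₁` with the sign `+`
or `−` at `v`, or a configuration of `T₂` with the red edge `vw`, is a bijection onto each of these
three classes, and it shifts `(Q, E)` by `(0, 0)`, `(1, 1)` and `(0, 1)` respectively. So the basis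
of `SC^k(T, n)` is the disjoint union of the images of the bases of the three outer terms, and the
sequence is split exact. The maps commute with `D` because the summands of `D` that keep the glued
piece are exactly the glued summands of `D` on the other piece, while the only other summands
(which delete the red edge `vw`) are killed by the projection.
-/

open Function LinearMap

section FunctionSpaces

variable {R : Type*} [Semiring R] {α β γ δ : Type*}

theorem injective_coprod_extendByZero {i : α → δ} {j : β → δ} (hi : Injective i)
    (hj : Injective j) (hij : Disjoint (Set.range i) (Set.range j)) :
    Injective (coprod (ExtendByZero.linearMap R i) (ExtendByZero.linearMap R j)) := by
  rintro ⟨f, g⟩ ⟨f', g'⟩ hfg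
  have hval (d : δ) := congrFun hfg d
  simp only [coprod_apply, ExtendByZero.linearMap_apply, Pi.add_apply] at hval
  have hi_notMem (b : β) : ¬∃ a, i a = j b := fun ⟨a, ha⟩ =>
    hij.ne_of_mem ⟨a, rfl⟩ ⟨b, rfl⟩ ha
  have hj_notMem (a : α) : ¬∃ b, j b = i a := fun ⟨b, hb⟩ =>
    hij.ne_of_mem ⟨a, rfl⟩ ⟨b, rfl⟩ hb.symm
  refine Prod.ext (funext fun a => ?_) (funext fun b => ?_)
  · simpa [hi.extend_apply, extend_apply' _ _ _ (hj_notMem a)] using hval (i a)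
  · simpa [hj.extend_apply, extend_apply' _ _ _ (hi_notMem b)] using hval (j b)

theorem range_coprod_extendByZero_eq_ker_funLeft {i : α → δ} {j : β → δ} {p : γ → δ}
    (hi : Injective i) (hj : Injective j) (hij : Disjoint (Set.range i) (Set.range j))
    (hp : (Set.range p)ᶜ = Set.range i ∪ Set.range j) :
    range (coprod (ExtendByZero.linearMap R i) (ExtendByZero.linearMap R j)) =
      ker (funLeft R R p) := by
  have hpi (c : γ) : ¬∃ a, i a = p c := fun hc =>
    (Set.ext_iff.1 hp (p c)).2 (Or.inl hc) ⟨c, rfl⟩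
  have hpj (c : γ) : ¬∃ b, j b = p c := fun hc =>
    (Set.ext_iff.1 hp (p c)).2 (Or.inr hc) ⟨c, rfl⟩
  ext F
  simp only [mem_range, mem_ker, coprod_apply]
  constructor
  · rintro ⟨⟨f, g⟩, rfl⟩
    ext c
    simp [funLeft_apply, extend_apply' _ _ _ (hpi c), extend_apply' _ _ _ (hpj c)]
  · intro hF
    refine ⟨(F ∘ i, F ∘ j), funext fun d => ?_⟩
    by_cases hdi : d ∈ Set.range i
    · obtain ⟨a, rfl⟩ := hdi
      simp [hi.extend_apply, extend_apply' _ _ _ fun ⟨b, hb⟩ =>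
        hij.ne_of_mem ⟨a, rfl⟩ ⟨b, rfl⟩ hb.symm]
    by_cases hdj : d ∈ Set.range j
    · obtain ⟨b, rfl⟩ := hdj
      simp [hj.extend_apply, extend_apply' _ _ _ hdi]
    obtain ⟨c, rfl⟩ : d ∈ Set.range p := by
      by_contra hdp
      rcases (Set.ext_iff.1 hp d).1 hdp with h | h <;> contradiction
    simpa [extend_apply' _ _ _ hdi, extend_apply' _ _ _ hdj] using (congrFun hF c).symm

theorem comp_coprod_eq_coprod_comp_prodMap {M₁ M₂ M₁' M₂' N N' : Type*} [AddCommMonoid M₁]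
    [AddCommMonoid M₂] [AddCommMonoid M₁'] [AddCommMonoid M₂'] [AddCommMonoid N]
    [AddCommMonoid N'] [Module R M₁] [Module R M₂] [Module R M₁'] [Module R M₂'] [Module R N]
    [Module R N'] {d : N →ₗ[R] N'} {d₁ : M₁ →ₗ[R] M₁'} {d₂ : M₂ →ₗ[R] M₂'}
    {f : M₁ →ₗ[R] N} {g : M₂ →ₗ[R] N} {f' : M₁' →ₗ[R] N'} {g' : M₂' →ₗ[R] N'}
    (hf : d ∘ₗ f = f' ∘ₗ d₁) (hg : d ∘ₗ g = g' ∘ₗ d₂) :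
    d ∘ₗ coprod f g = coprod f' g' ∘ₗ d₁.prodMap d₂ := by
  rw [comp_coprod, hf, hg]
  ext <;> simp

end FunctionSpaces

section SumLin

variable {α α' β β' : Type}

theorem sumLin_eq_extendByZero [Fintype α] {g : α → β} (hg : Injective g)
    {r : α → β → Prop} (hr : ∀ a b, r a b ↔ b = g a) :
    sumLin r = ExtendByZero.linearMap (ZMod 2) g := by
  refine LinearMap.ext fun f => funext fun b => ?_
  change ∑ a, (if r a b then f a else 0) = extend g f 0 b
  simp only [hr]
  by_cases hb : ∃ a, g a = b
  · obtain ⟨a, rfl⟩ := hb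
    simp [hg.eq_iff, hg.extend_apply]
  · rw [extend_apply' _ _ _ hb]
    exact Finset.sum_eq_zero fun a _ => if_neg fun h => hb ⟨a, h.symm⟩

theorem sumLin_eq_funLeft [Fintype α] {h : β → α} {r : α → β → Prop}
    (hr : ∀ a b, r a b ↔ a = h b) :
    sumLin r = funLeft (ZMod 2) (ZMod 2) h := by
  refine LinearMap.ext fun f => funext fun b => ?_
  change ∑ a, (if r a b then f a else 0) = f (h b)
  simp [hr]

theorem sumLin_comp_extendByZero [Fintype α] [Fintype β] {g : α → β} {g' : α' → β'}
    (hg : Injective g) (hg' : Injective g') {r : α → α' → Prop} {s : β → β' → Prop}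
    (hs : ∀ a a', s (g a) (g' a') ↔ r a a') (hs_range : ∀ a b', s (g a) b' → b' ∈ Set.range g') :
    sumLin s ∘ₗ ExtendByZero.linearMap (ZMod 2) g =
      ExtendByZero.linearMap (ZMod 2) g' ∘ₗ sumLin r := by
  refine LinearMap.ext fun f => funext fun b' => ?_
  change ∑ b, (if s b b' then extend g f 0 b else 0) = extend g' (sumLin r f) 0 b'
  rw [← Fintype.sum_of_injective g hg (fun a => if s (g a) b' then f a else 0) _
    (fun b hb => by simp [extend_apply' _ _ _ hb]) (fun a => by simp [hg.extend_apply])]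
  by_cases hb' : ∃ a', g' a' = b'
  · obtain ⟨a', rfl⟩ := hb'
    simp only [hs, hg'.extend_apply]
    rfl
  · rw [extend_apply' _ _ _ hb']
    exact Finset.sum_eq_zero fun a _ => if_neg fun h => hb' (hs_range a b' h)

theorem sumLin_comp_funLeft [Fintype α] [Fintype β] {h : α → β} {h' : α' → β'}
    (hh : Injective h) {r : α → α' → Prop} {s : β → β' → Prop}
    (hs : ∀ a a', s (h a) (h' a') ↔ r a a') (hs_range : ∀ b a', s b (h' a') → b ∈ Set.range h) :
    sumLin r ∘ₗ funLeft (ZMod 2) (ZMod 2) h = funLeft (ZMod 2) (ZMod 2) h' ∘ₗ sumLin s := by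
  refine LinearMap.ext fun F => funext fun a' => ?_
  change ∑ a, (if r a a' then F (h a) else 0) = ∑ b, (if s b (h' a') then F b else 0)
  refine Fintype.sum_of_injective h hh _ _ (fun b hb => if_neg fun hsb => hb ?_) fun a => ?_
  · exact hs_range b a' hsb
  · simp only [hs]

end SumLin

section InducedSubgraph

variable {V : Type} {G : SimpleGraph V} {S : Set V}

theorem val_mem_map_val {x : S} {e : Sym2 S} : x.1 ∈ e.map Subtype.val ↔ x ∈ e :=
  Sym2.mem_map.trans ⟨fun ⟨_, hy, hyx⟩ => Subtype.ext hyx ▸ hy, fun h => ⟨x, h, rfl⟩⟩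

theorem mem_of_mem_map_val {x : V} {e : Sym2 S} (hx : x ∈ e.map Subtype.val) : x ∈ S := by
  obtain ⟨y, -, rfl⟩ := Sym2.mem_map.1 hx
  exact y.2

theorem map_val_injective : Injective (Sym2.map (Subtype.val : S → V)) :=
  Sym2.map.injective Subtype.val_injective

theorem map_val_mem_edgeSet_induce {e : Sym2 S} :
    e.map Subtype.val ∈ G.edgeSet ↔ e ∈ (G.induce S).edgeSet := by
  induction e using Sym2.ind
  simp

theorem disjoint_image_map_val (R : Finset (Sym2 S)) (R' : Finset (Sym2 ↥Sᶜ)) :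
    Disjoint (R.image (Sym2.map Subtype.val)) (R'.image (Sym2.map Subtype.val)) := by
  refine Finset.disjoint_left.2 fun e he he' => ?_
  obtain ⟨e, -, rfl⟩ := Finset.mem_image.1 he
  obtain ⟨e', -, he'⟩ := Finset.mem_image.1 he'
  have hx : e.out.1.1 ∈ e'.map Subtype.val := he' ▸ val_mem_map_val.2 e.out_fst_mem
  exact mem_of_mem_map_val hx e.out.1.2

theorem exists_mem_image_map_val {R : Finset (Sym2 S)} {x : V} :
    (∃ e ∈ R.image (Sym2.map Subtype.val), x ∈ e) ↔ ∃ h : x ∈ S, ∃ e ∈ R, ⟨x, h⟩ ∈ e := by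
  constructor
  · rintro ⟨_, he', hx⟩
    obtain ⟨e, he, rfl⟩ := Finset.mem_image.1 he'
    exact ⟨mem_of_mem_map_val hx, e, he, val_mem_map_val.1 hx⟩
  · rintro ⟨h, e, he, hx⟩
    exact ⟨_, Finset.mem_image_of_mem _ he, val_mem_map_val.2 hx⟩

theorem IsMatching.image_map_val {R : Finset (Sym2 S)} (hR : IsMatching (G.induce S) R) :
    IsMatching G (R.image (Sym2.map Subtype.val)) := by
  constructor
  · intro _ he'
    obtain ⟨e, he, rfl⟩ := Finset.mem_image.1 he'
    exact map_val_mem_edgeSet_induce.2 (hR.1 e he)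
  · intro _ he' _ hf' hne x hxe hxf
    obtain ⟨e, he, rfl⟩ := Finset.mem_image.1 he'
    obtain ⟨f, hf, rfl⟩ := Finset.mem_image.1 hf'
    exact hR.2 e he f hf (ne_of_apply_ne _ hne) ⟨x, mem_of_mem_map_val hxe⟩
      (val_mem_map_val.1 hxe) (val_mem_map_val.1 hxf)

theorem IsMatching.union {R R' : Finset (Sym2 V)} (hR : IsMatching G R) (hR' : IsMatching G R')
    (h : ∀ e ∈ R, ∀ f ∈ R', ∀ x ∈ e, x ∉ f) : IsMatching G (R ∪ R') := by
  refine ⟨fun e he => (Finset.mem_union.1 he).elim (hR.1 e) (hR'.1 e), ?_⟩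
  intro e he f hf hne x hxe hxf
  rcases Finset.mem_union.1 he with he | he <;> rcases Finset.mem_union.1 hf with hf | hf
  · exact hR.2 e he f hf hne x hxe hxf
  · exact h e he f hf x hxe hxf
  · exact h f hf e he x hxf hxe
  · exact hR'.2 e he f hf hne x hxe hxf

end InducedSubgraph

namespace Config

variable {V : Type} {G : SimpleGraph V} {S : Set V}

@[ext]
theorem ext {C C' : Config G} (hred : C.red = C'.red) (hsign : C.sign = C'.sign) : C = C' := by
  cases C
  cases C'
  simp_all

theorem sign_eq_none {C : Config G} {e : Sym2 V} (he : e ∈ C.red) {x : V} (hx : x ∈ e) :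
    C.sign x = none :=
  (C.sign_none x).2 ⟨e, he, hx⟩

theorem eq_of_mem_of_mem {C : Config G} {e f : Sym2 V} (he : e ∈ C.red) (hf : f ∈ C.red)
    {x : V} (hxe : x ∈ e) (hxf : x ∈ f) : e = f :=
  by_contra fun hne => C.matching.2 e he f hf hne x hxe hxf

noncomputable def glue (A : Config (G.induce S)) (B : Config (G.induce Sᶜ)) : Config G where
  red := A.red.image (Sym2.map Subtype.val) ∪ B.red.image (Sym2.map Subtype.val)
  matching := A.matching.image_map_val.union B.matching.image_map_val
    fun _ he _ hf x hxe hxf => by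
      obtain ⟨hxS, -⟩ := exists_mem_image_map_val.1 ⟨_, he, hxe⟩
      obtain ⟨hxS', -⟩ := exists_mem_image_map_val.1 ⟨_, hf, hxf⟩
      exact hxS' hxS
  sign x := if h : x ∈ S then A.sign ⟨x, h⟩ else B.sign ⟨x, h⟩
  sign_none x := by
    by_cases h : x ∈ S
    · simp [h, A.sign_none, or_and_right, exists_or]
    · simp [h, B.sign_none, or_and_right, exists_or]

section Glue

variable (A : Config (G.induce S)) (B : Config (G.induce Sᶜ))

theorem glue_sign_val (x : S) : (A.glue B).sign x = A.sign x := dif_pos x.2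

theorem glue_sign_compl_val (x : ↥Sᶜ) : (A.glue B).sign x = B.sign x := dif_neg x.2

theorem map_val_mem_glue_red {e : Sym2 S} : e.map Subtype.val ∈ (A.glue B).red ↔ e ∈ A.red := by
  refine ⟨fun he => ?_, fun he => Finset.mem_union_left _ (Finset.mem_image_of_mem _ he)⟩
  rcases Finset.mem_union.1 he with he | he
  · exact map_val_injective.mem_finset_image.1 he
  · exact absurd he (Finset.disjoint_left.1 (disjoint_image_map_val {e} B.red)
      (Finset.mem_image_of_mem _ (Finset.mem_singleton_self e)))

theorem glue_left_injective : Injective fun A : Config (G.induce S) => A.glue B := by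
  intro A A' (h : A.glue B = A'.glue B)
  ext1
  · ext e
    rw [← map_val_mem_glue_red A B, ← map_val_mem_glue_red A' B, h]
  · funext x
    rw [← glue_sign_val A B, ← glue_sign_val A' B, h]

theorem card_red_glue : (A.glue B).red.card = A.red.card + B.red.card := by
  rw [glue, Finset.card_union_of_disjoint (disjoint_image_map_val A.red B.red),
    Finset.card_image_of_injective _ map_val_injective,
    Finset.card_image_of_injective _ map_val_injective]

variable [Fintype V] [Fintype S] [Fintype ↥Sᶜ]

theorem Qg_glue : Qg (A.glue B) = Qg A + Qg B := by
  simp only [Qg, Finset.card_filter]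
  rw [← Fintype.sum_subtype_add_sum_subtype (· ∈ S)]
  congr 1
  · exact Finset.sum_congr (by convert rfl) fun x _ => by rw [glue_sign_val]
  · exact Finset.sum_congr (by convert rfl) fun x _ => by rw [glue_sign_compl_val A B x]

theorem Eg_glue : Eg (A.glue B) = Eg A + Eg B := by
  simp only [Eg, Qg_glue, card_red_glue]
  ring

end Glue

theorem DStep_glue_iff (A A' : Config (G.induce S)) (B : Config (G.induce Sᶜ)) :
    DStep (A.glue B) (A'.glue B) ↔ DStep A A' := by
  constructor
  · rintro ⟨_, he, hred, hsign, u, u', rfl, hu, hu'⟩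
    -- The endpoints of the deleted edge get signs, while outside `S` the signs are those of `B`,
    -- which leaves the endpoints of a red edge of `A.glue B` unsigned.
    have mem_S {x : V} (hx : (A'.glue B).sign x ≠ none) (hxe : x ∈ s(u, u')) : x ∈ S :=
      by_contra fun h => hx <| by
        rw [show x = (⟨x, h⟩ : ↥Sᶜ).1 from rfl, glue_sign_compl_val, ← glue_sign_compl_val A B]
        exact sign_eq_none he hxe
    set p : S := ⟨u, mem_S (by simp [hu]) (Sym2.mem_mk_left u u')⟩
    set q : S := ⟨u', mem_S (by simp [hu']) (Sym2.mem_mk_right u u')⟩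
    have hpq : s(u, u') = s(p, q).map Subtype.val := rfl
    rw [hpq] at he hred hsign
    refine ⟨s(p, q), (map_val_mem_glue_red A B).1 he, ?_, fun x hx => ?_, p, q, rfl, ?_, ?_⟩
    · ext e
      rw [← map_val_mem_glue_red A' B, hred, Finset.mem_erase, map_val_mem_glue_red,
        map_val_injective.ne_iff]
      simp only [Finset.mem_erase]
    · rw [← glue_sign_val A' B, ← glue_sign_val A B]
      exact hsign x (mt val_mem_map_val.1 hx)
    · rwa [← glue_sign_val A' B]
    · rwa [← glue_sign_val A' B]
  · rintro ⟨e, he, hred, hsign, p, q, rfl, hp, hq⟩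
    refine ⟨s(p, q).map Subtype.val, (map_val_mem_glue_red A B).2 he, ?_, fun x hx => ?_,
      p, q, rfl, by rwa [glue_sign_val], by rwa [glue_sign_val]⟩
    · have hred' : A'.red = A.red.erase s(p, q) := by convert hred
      change _ ∪ _ = Finset.erase (_ ∪ _) _
      rw [hred', Finset.image_erase map_val_injective, Finset.erase_union_distrib,
        Finset.erase_eq_of_notMem (s := B.red.image _) fun h =>
          Finset.disjoint_left.1 (disjoint_image_map_val {s(p, q)} B.red)
            (Finset.mem_image_of_mem _ (Finset.mem_singleton_self _)) h]
    · by_cases h : x ∈ S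
      · rw [show x = (⟨x, h⟩ : S).1 from rfl, glue_sign_val, glue_sign_val]
        exact hsign _ (mt val_mem_map_val.2 hx)
      · rw [show x = (⟨x, h⟩ : ↥Sᶜ).1 from rfl, glue_sign_compl_val, glue_sign_compl_val]

noncomputable def restrict (C : Config G) (S : Set V)
    (hC : ∀ e ∈ C.red, ∀ x ∈ e, x ∈ S → ∀ y ∈ e, y ∈ S) : Config (G.induce S) where
  red := C.red.preimage (Sym2.map Subtype.val) map_val_injective.injOn
  matching :=
    ⟨fun _ he => map_val_mem_edgeSet_induce.1 (C.matching.1 _ (Finset.mem_preimage.1 he)),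
      fun _ he _ hf hne x hxe hxf => C.matching.2 _ (Finset.mem_preimage.1 he) _
        (Finset.mem_preimage.1 hf) (map_val_injective.ne hne) x (val_mem_map_val.2 hxe)
        (val_mem_map_val.2 hxf)⟩
  sign x := C.sign x
  sign_none x := by
    rw [C.sign_none]
    constructor
    · rintro ⟨e, he, hxe⟩
      have hS : ∀ y ∈ e, y ∈ S := hC e he x hxe x.2
      refine ⟨e.attachWith hS, Finset.mem_preimage.2 ?_, ?_⟩
      · rwa [Sym2.attachWith_map_subtypeVal]
      · rwa [← val_mem_map_val, Sym2.attachWith_map_subtypeVal]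
    · rintro ⟨e, he, hxe⟩
      exact ⟨_, Finset.mem_preimage.1 he, val_mem_map_val.2 hxe⟩

theorem mem_restrict_red {C : Config G} {hC : ∀ e ∈ C.red, ∀ x ∈ e, x ∈ S → ∀ y ∈ e, y ∈ S}
    {e : Sym2 S} : e ∈ (C.restrict S hC).red ↔ e.map Subtype.val ∈ C.red :=
  Finset.mem_preimage (hf := map_val_injective.injOn)

theorem restrict_glue {C : Config G} (hC : ∀ e ∈ C.red, ∀ x ∈ e, x ∈ S → ∀ y ∈ e, y ∈ S)
    {B : Config (G.induce Sᶜ)}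
    (hred : ∀ e ∈ C.red, (∀ x ∈ e, x ∉ S) → e ∈ B.red.image (Sym2.map Subtype.val))
    (hB : B.red.image (Sym2.map Subtype.val) ⊆ C.red) (hsign : ∀ x : ↥Sᶜ, C.sign x = B.sign x) :
    (C.restrict S hC).glue B = C := by
  ext1
  · ext e
    refine ⟨fun he => ?_, fun he => ?_⟩
    · rcases Finset.mem_union.1 he with hA | hB'
      · obtain ⟨e', he', rfl⟩ := Finset.mem_image.1 hA
        exact mem_restrict_red.1 he'
      · exact hB hB'
    · by_cases hS : ∃ x ∈ e, x ∈ S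
      · obtain ⟨x, hxe, hxS⟩ := hS
        refine Finset.mem_union_left _ (Finset.mem_image.2 ⟨e.attachWith (hC e he x hxe hxS),
          mem_restrict_red.2 ?_, Sym2.attachWith_map_subtypeVal _⟩)
        rwa [Sym2.attachWith_map_subtypeVal]
      · push Not at hS
        exact Finset.mem_union_right _ (hred e he hS)
  · funext x
    by_cases h : x ∈ S
    · exact glue_sign_val _ B ⟨x, h⟩
    · exact (glue_sign_compl_val _ B ⟨x, h⟩).trans (hsign ⟨x, h⟩).symm

end Config

section DStep

variable {V : Type} {G : SimpleGraph V} {C C' : Config G}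

theorem DStep.sign_eq (h : DStep C C') {x : V} (hx : C.sign x ≠ none) : C'.sign x = C.sign x := by
  obtain ⟨e, he, -, hsign, -⟩ := h
  exact hsign x fun hxe => hx (Config.sign_eq_none he hxe)

theorem DStep.sign_eq_none (h : DStep C C') {x : V} (hx : C'.sign x = none) :
    C.sign x = none := by
  obtain ⟨e, he, hred, -⟩ := h
  obtain ⟨f, hf, hxf⟩ := (C'.sign_none x).1 hx
  rw [hred] at hf
  exact Config.sign_eq_none (Finset.mem_of_mem_erase hf) hxf

end DStep

section Leaf

variable {V : Type} {G : SimpleGraph V} {v w : V}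

theorem edge_eq_of_neighborSet_eq (hv : G.neighborSet v = {w}) {e : Sym2 V}
    (he : e ∈ G.edgeSet) (hve : v ∈ e) : e = s(v, w) := by
  rw [← Sym2.other_spec hve] at he ⊢
  have : Sym2.Mem.other hve ∈ G.neighborSet v := he
  rw [hv, Set.mem_singleton_iff] at this
  rw [this]

theorem notMem_setOf_ne_and_ne {x : V} : x ∉ {x | x ≠ v ∧ x ≠ w} ↔ x = v ∨ x = w := by
  simp only [Set.mem_ofPred_eq, not_and_or, not_not]

namespace Config

/-- The single vertex `v` with sign `b`, written over `{x | x ≠ v}ᶜ` rather than `{v}` so that it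
glues with configurations of `G.induce {x | x ≠ v}`. -/
def signed (G : SimpleGraph V) (v : V) (b : Bool) : Config (G.induce {x | x ≠ v}ᶜ) where
  red := ∅
  matching := ⟨by simp, by simp⟩
  sign _ := some b
  sign_none _ := by simp

def redEdge (hvw : G.Adj v w) : Config (G.induce {x | x ≠ v ∧ x ≠ w}ᶜ) where
  red := {s(⟨v, by simp⟩, ⟨w, by simp⟩)}
  matching := ⟨by simpa using hvw, by simp⟩
  sign _ := none
  sign_none x := by simpa [Sym2.mem_iff, Subtype.ext_iff] using notMem_setOf_ne_and_ne.1 x.2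

theorem exists_glue_signed_eq_iff (b : Bool) (C : Config G) :
    (∃ A, glue A (signed G v b) = C) ↔ C.sign v = some b := by
  refine ⟨fun ⟨A, hA⟩ => hA ▸ glue_sign_compl_val A _ ⟨v, by simp⟩, fun h => ?_⟩
  have hv : ∀ e ∈ C.red, ∀ x ∈ e, x ≠ v := fun e he x hx hxv => by
    simp [sign_eq_none he (hxv ▸ hx)] at h
  refine ⟨C.restrict _ fun e he _ _ _ y hy => hv e he y hy, restrict_glue _ ?_ ?_ ?_⟩
  · intro e he he'
    exact absurd (hv e he _ e.out_fst_mem) (by simpa using he' _ e.out_fst_mem)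
  · simp [signed]
  · intro x
    rw [show x.1 = v by simpa using x.2]
    exact h

theorem exists_glue_redEdge_eq_iff (hvw : G.Adj v w) (hv : G.neighborSet v = {w})
    (C : Config G) : (∃ A, glue A (redEdge hvw) = C) ↔ C.sign v = none := by
  refine ⟨fun ⟨A, hA⟩ => hA ▸ glue_sign_compl_val A _ ⟨v, by simp⟩, fun h => ?_⟩
  obtain ⟨e₀, he₀, hve₀⟩ := (C.sign_none v).1 h
  obtain rfl := edge_eq_of_neighborSet_eq hv (C.matching.1 e₀ he₀) hve₀
  have eq_vw : ∀ e ∈ C.red, ∀ x ∈ e, x ∉ {x | x ≠ v ∧ x ≠ w} → e = s(v, w) := by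
    intro e he x hx hxS
    rcases notMem_setOf_ne_and_ne.1 hxS with rfl | rfl
    · exact edge_eq_of_neighborSet_eq hv (C.matching.1 e he) hx
    · exact eq_of_mem_of_mem he he₀ hx (Sym2.mem_mk_right _ _)
  refine ⟨C.restrict _ fun e he x hx hxS y hy => ?_, restrict_glue _ ?_ ?_ ?_⟩
  · by_contra hyS
    rw [eq_vw e he y hy hyS] at hx
    exact notMem_setOf_ne_and_ne.2 (Sym2.mem_iff.1 hx) hxS
  · intro e he he'
    simp [redEdge, eq_vw e he _ e.out_fst_mem (he' _ e.out_fst_mem)]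
  · simp [redEdge, he₀]
  · intro x
    exact sign_eq_none he₀ (Sym2.mem_iff.2 (notMem_setOf_ne_and_ne.1 x.2))

theorem extendRel_iff (b : Bool) (A : Config (G.induce {x | x ≠ v})) (C : Config G) :
    extendRel G v b A C ↔ C = A.glue (signed G v b) := by
  constructor
  · rintro ⟨hred, hv, hsign⟩
    ext1
    · simp [hred, glue, signed]
    · funext x
      by_cases h : x = v
      · subst h
        exact hv.trans (glue_sign_compl_val A (signed G x b) ⟨x, by simp⟩).symm
      · exact (hsign ⟨x, h⟩).trans (glue_sign_val A _ ⟨x, h⟩).symm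
  · rintro rfl
    exact ⟨by simp [glue, signed], glue_sign_compl_val A _ ⟨v, by simp⟩, glue_sign_val A _⟩

theorem quotRel_iff (hvw : G.Adj v w) (C : Config G) (A : Config (G.induce {x | x ≠ v ∧ x ≠ w})) :
    quotRel G v w C A ↔ C = A.glue (redEdge hvw) := by
  have hvw_red : (redEdge hvw).red.image (Sym2.map Subtype.val) = {s(v, w)} := by simp [redEdge]
  have hvw_notMem : s(v, w) ∉ A.red.image (Sym2.map Subtype.val) := fun h =>
    Finset.disjoint_left.1 (disjoint_image_map_val A.red (redEdge hvw).red) h (by simp [hvw_red])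
  constructor
  · rintro ⟨hmem, hred, hsign⟩
    ext1
    · change C.red = _ ∪ _
      rw [hred, hvw_red, Finset.union_comm, ← Finset.insert_eq, Finset.insert_erase hmem]
    · funext x
      by_cases h : x ∈ {x | x ≠ v ∧ x ≠ w}
      · exact (hsign ⟨x, h⟩).symm.trans (glue_sign_val A _ ⟨x, h⟩).symm
      · exact (sign_eq_none hmem (Sym2.mem_iff.2 (notMem_setOf_ne_and_ne.1 h))).trans
          (glue_sign_compl_val A (redEdge hvw) ⟨x, h⟩).symm
  · rintro rfl
    refine ⟨Finset.mem_union_right _ (by simp [hvw_red]), ?_, fun x => (glue_sign_val A _ x).symm⟩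
    change _ = Finset.erase (_ ∪ _) _
    rw [hvw_red, Finset.union_comm, ← Finset.insert_eq, Finset.erase_insert hvw_notMem]

variable [Fintype V]

@[simp] theorem Qg_signed_true : Qg (signed G v true) = 0 := by simp [Qg, signed]

@[simp] theorem Qg_signed_false : Qg (signed G v false) = 1 := by simp [Qg, signed]

@[simp] theorem Eg_signed (b : Bool) : Eg (signed G v b) = Qg (signed G v b) := by
  simp [Eg, signed]

@[simp] theorem Qg_redEdge (hvw : G.Adj v w) : Qg (redEdge hvw) = 0 := by simp [Qg, redEdge]

@[simp] theorem Eg_redEdge (hvw : G.Adj v w) : Eg (redEdge hvw) = 1 := by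
  rw [Eg, Qg_redEdge]
  rfl

end Config

end Leaf

section Graded

variable {G : SimpleGraph V}

abbrev GradedConfig (G : SimpleGraph V) (k n : ℤ) : Type :=
  {C : Config G // (Qg C : ℤ) = k ∧ (Eg C : ℤ) = n}

namespace Config

variable {S : Set V} [Fintype S] [Fintype ↥Sᶜ] (B : Config (G.induce Sᶜ)) {k n k' n' : ℤ}
  (hk : k + Qg B = k') (hn : n + Eg B = n')

noncomputable def gradedGlue (A : GradedConfig (G.induce S) k n) : GradedConfig G k' n' :=
  ⟨A.1.glue B, by rw [Qg_glue, ← hk, Nat.cast_add, A.2.1],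
    by rw [Eg_glue, ← hn, Nat.cast_add, A.2.2]⟩

theorem gradedGlue_injective : Injective (gradedGlue B hk hn) :=
  fun _ _ h => Subtype.ext (glue_left_injective B (congrArg Subtype.val h))

theorem range_gradedGlue : Set.range (gradedGlue B hk hn) = {C | ∃ A, glue A B = C.1} := by
  ext C
  refine ⟨fun ⟨A, hA⟩ => ⟨A.1, congrArg Subtype.val hA⟩, fun ⟨A, hA⟩ => ?_⟩
  have hQ := C.2.1
  have hE := C.2.2
  rw [← hA, Qg_glue, Nat.cast_add, ← hk, add_left_inj] at hQ
  rw [← hA, Eg_glue, Nat.cast_add, ← hn, add_left_inj] at hE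
  exact ⟨⟨A, hQ, hE⟩, Subtype.ext hA⟩

end Config

open Config

variable {v w : V}

theorem range_gradedGlue_signed (b : Bool) {k n k' n' : ℤ} (hk : k + Qg (signed G v b) = k')
    (hn : n + Eg (signed G v b) = n') :
    Set.range (gradedGlue (signed G v b) hk hn) = {C | C.1.sign v = some b} := by
  rw [range_gradedGlue]
  exact Set.ext fun C => exists_glue_signed_eq_iff b C.1

theorem range_gradedGlue_redEdge (hvw : G.Adj v w) (hv : G.neighborSet v = {w}) {k n k' n' : ℤ}
    (hk : k + Qg (redEdge hvw) = k') (hn : n + Eg (redEdge hvw) = n') :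
    Set.range (gradedGlue (redEdge hvw) hk hn) = {C | C.1.sign v = none} := by
  rw [range_gradedGlue]
  exact Set.ext fun C => exists_glue_redEdge_eq_iff hvw hv C.1

theorem sumLin_extendRel_eq (b : Bool) {k n k' n' : ℤ} (hk : k + Qg (signed G v b) = k')
    (hn : n + Eg (signed G v b) = n') :
    sumLin (fun (A : GradedConfig (G.induce {x | x ≠ v}) k n) (C : GradedConfig G k' n') =>
        extendRel G v b A.1 C.1) =
      ExtendByZero.linearMap (ZMod 2) (gradedGlue (signed G v b) hk hn) :=
  sumLin_eq_extendByZero (gradedGlue_injective _ hk hn)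
    fun A C => by rw [extendRel_iff, Subtype.ext_iff]; rfl

theorem inclMap_eq (G : SimpleGraph V) (v : V) {k₁ n₁ k₂ n₂ k n : ℤ} (h₁ : k₁ = k) (h₁' : n₁ = n)
    (h₂ : k₂ + 1 = k) (h₂' : n₂ + 1 = n) :
    inclMap G v k₁ n₁ k₂ n₂ k n =
      coprod (ExtendByZero.linearMap (ZMod 2) (gradedGlue (signed G v true)
          (by simpa using h₁) (by simpa using h₁')))
        (ExtendByZero.linearMap (ZMod 2) (gradedGlue (signed G v false)
          (by simpa using h₂) (by simpa using h₂'))) :=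
  congrArg₂ coprod (sumLin_extendRel_eq true _ _) (sumLin_extendRel_eq false _ _)

theorem projMap_eq (hvw : G.Adj v w) {k n k' n' : ℤ} (hk : k' = k) (hn : n' + 1 = n) :
    projMap G v w k n k' n' = funLeft (ZMod 2) (ZMod 2)
      (gradedGlue (redEdge hvw) (by simpa using hk) (by simpa using hn)) :=
  sumLin_eq_funLeft fun C A => by rw [quotRel_iff hvw, Subtype.ext_iff]; rfl

theorem Dgr_comp_extendByZero_gradedGlue_signed (b : Bool) {k₀ n₀ k₀' n₀' k n k' n' : ℤ}
    (hk : k₀ + Qg (signed G v b) = k) (hn : n₀ + Eg (signed G v b) = n)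
    (hk' : k₀' + Qg (signed G v b) = k') (hn' : n₀' + Eg (signed G v b) = n') :
    Dgr G k n k' n' ∘ₗ ExtendByZero.linearMap (ZMod 2) (gradedGlue (signed G v b) hk hn) =
      ExtendByZero.linearMap (ZMod 2) (gradedGlue (signed G v b) hk' hn') ∘ₗ
        Dgr (G.induce {x | x ≠ v}) k₀ n₀ k₀' n₀' := by
  refine sumLin_comp_extendByZero (gradedGlue_injective _ _ _) (gradedGlue_injective _ _ _)
    (fun A A' => DStep_glue_iff A.1 A'.1 _) fun A C' hAC' => ?_
  have hA : (gradedGlue (signed G v b) hk hn A).1.sign v = some b :=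
    (exists_glue_signed_eq_iff b _).1 ⟨A.1, rfl⟩
  rw [range_gradedGlue_signed]
  exact (hAC'.sign_eq (by simp [hA])).trans hA

theorem Dgr_comp_funLeft_gradedGlue_redEdge (hvw : G.Adj v w) (hv : G.neighborSet v = {w})
    {k₀ n₀ k₀' n₀' k n k' n' : ℤ}
    (hk : k₀ + Qg (redEdge hvw) = k) (hn : n₀ + Eg (redEdge hvw) = n)
    (hk' : k₀' + Qg (redEdge hvw) = k') (hn' : n₀' + Eg (redEdge hvw) = n') :
    Dgr (G.induce {x | x ≠ v ∧ x ≠ w}) k₀ n₀ k₀' n₀' ∘ₗ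
        funLeft (ZMod 2) (ZMod 2) (gradedGlue (redEdge hvw) hk hn) =
      funLeft (ZMod 2) (ZMod 2) (gradedGlue (redEdge hvw) hk' hn') ∘ₗ Dgr G k n k' n' := by
  refine sumLin_comp_funLeft (gradedGlue_injective _ _ _)
    (fun A A' => DStep_glue_iff A.1 A'.1 _) fun C A' hCA' => ?_
  rw [range_gradedGlue_redEdge hvw hv]
  exact hCA'.sign_eq_none ((exists_glue_redEdge_eq_iff hvw hv _).1 ⟨A'.1, rfl⟩)

end Graded

theorem short_exact_sequence_general (G : SimpleGraph V) (v w : V)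
    (hv : G.neighborSet v = {w}) (k n : ℤ) :
    Function.Injective (inclMap G v k n (k - 1) (n - 1) k n) ∧
      LinearMap.range (inclMap G v k n (k - 1) (n - 1) k n) =
        LinearMap.ker (projMap G v w k n k (n - 1)) ∧
      Function.Surjective (projMap G v w k n k (n - 1)) ∧
      Dgr G k n (k + 1) n ∘ₗ inclMap G v k n (k - 1) (n - 1) k n =
        inclMap G v (k + 1) n k (n - 1) (k + 1) n ∘ₗ
          ((Dgr (G.induce {x : V | x ≠ v}) k n (k + 1) n).prodMap
            (Dgr (G.induce {x : V | x ≠ v}) (k - 1) (n - 1) k (n - 1))) ∧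
      Dgr (G.induce {x : V | x ≠ v ∧ x ≠ w}) k (n - 1) (k + 1) (n - 1) ∘ₗ
          projMap G v w k n k (n - 1) =
        projMap G v w (k + 1) n (k + 1) (n - 1) ∘ₗ Dgr G k n (k + 1) n := by
  have hvw : G.Adj v w := (Set.ext_iff.1 hv w).2 rfl
  rw [inclMap_eq G v rfl rfl (sub_add_cancel k 1) (sub_add_cancel n 1),
    inclMap_eq G v rfl rfl rfl (sub_add_cancel n 1), projMap_eq hvw rfl (sub_add_cancel n 1),
    projMap_eq hvw rfl (sub_add_cancel n 1)]
  refine ⟨injective_coprod_extendByZero (Config.gradedGlue_injective _ _ _)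
      (Config.gradedGlue_injective _ _ _) ?disjoint,
    range_coprod_extendByZero_eq_ker_funLeft (Config.gradedGlue_injective _ _ _)
      (Config.gradedGlue_injective _ _ _) ?disjoint ?cover,
    funLeft_surjective_of_injective _ _ _ (Config.gradedGlue_injective _ _ _),
    comp_coprod_eq_coprod_comp_prodMap (Dgr_comp_extendByZero_gradedGlue_signed _ _ _ _ _)
      (Dgr_comp_extendByZero_gradedGlue_signed _ _ _ _ _),
    Dgr_comp_funLeft_gradedGlue_redEdge hvw hv _ _ _ _⟩
  case disjoint =>
    rw [range_gradedGlue_signed, range_gradedGlue_signed]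
    exact Set.disjoint_left.2 fun C (h : _ = _) (h' : _ = _) => by simp [h] at h'
  case cover =>
    rw [range_gradedGlue_signed, range_gradedGlue_signed, range_gradedGlue_redEdge hvw hv]
    ext C
    simp only [Set.mem_compl_iff, Set.mem_union, Set.mem_ofPred_eq]
    generalize C.1.sign v = s
    rcases s with _ | _ | _ <;> simp

/-- the short exact sequence
`0 → SC^k(T₁,n) ⊕ SC^{k-1}(T₁,n-1) → SC^k(T,n) → SC^k(T₂,n-1) → 0`,
whose maps moreover commute with the differential `D`. -/
theorem short_exact_sequence (G : SimpleGraph V) (hG : G.IsTree) (v w : V)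
    (hv : G.neighborSet v = {w}) (k n : ℤ) :
    Function.Injective (inclMap G v k n (k - 1) (n - 1) k n) ∧
      LinearMap.range (inclMap G v k n (k - 1) (n - 1) k n) =
        LinearMap.ker (projMap G v w k n k (n - 1)) ∧
      Function.Surjective (projMap G v w k n k (n - 1)) ∧
      Dgr G k n (k + 1) n ∘ₗ inclMap G v k n (k - 1) (n - 1) k n =
        inclMap G v (k + 1) n k (n - 1) (k + 1) n ∘ₗ
          ((Dgr (G.induce {x : V | x ≠ v}) k n (k + 1) n).prodMap
            (Dgr (G.induce {x : V | x ≠ v}) (k - 1) (n - 1) k (n - 1))) ∧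
      Dgr (G.induce {x : V | x ≠ v ∧ x ≠ w}) k (n - 1) (k + 1) (n - 1) ∘ₗ
          projMap G v w k n k (n - 1) =
        projMap G v w (k + 1) n (k + 1) (n - 1) ∘ₗ Dgr G k n (k + 1) n :=
  short_exact_sequence_general G v w hv k n

end Seifert
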